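/- Double negation elimination fails: there is a subject-dependent structure M, formula ψ, and state e with (M,e) ⊨ ¬¬ψ but (M,e) ⊭ ψ. Concretely, in the example structure with relation R₁ (H[s](d)=1 iff d is the first element of s), at the initial state neither R₁(0) nor ¬R₁(0) holds, but ¬¬(R₁(0) ∨ ¬R₁(0)) holds while R₁(0) ∨ ¬R₁(0) does not. -/
import Mathlib


/-- The example relation `R₁`: `H[s](d) = 1` iff `d` is the first element of `s`. -/
def Hex : List (Fin 2) → Fin 2 → Fin 2 :=
  fun s d => if s.head? = some d then 1 else 0

/-- Satisfaction of the atomic formula `R₁(0)` at the state with query string `s`: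
at every future query string in which `R₁` at `0` is determined, its value is `1`. -/
def SatR0 (s : List (Fin 2)) : Prop :=
  ∀ t : List (Fin 2), (∃ v, t = s ++ v) → (0 : Fin 2) ∈ t → Hex t 0 = 1

/-- The paper's negation clause: `¬ψ` holds at `s` iff `ψ` fails at every future state. -/
def SatNeg (P : List (Fin 2) → Prop) (s : List (Fin 2)) : Prop :=
  ∀ t : List (Fin 2), (∃ v, t = s ++ v) → ¬ P t


lemma satR0_head0 (l : List (Fin 2)) : SatR0 (0 :: l) := by
  rintro t ⟨v, rfl⟩ _
  simp [Hex]

lemma not_satR0_head1 (l : List (Fin 2)) : ¬ SatR0 (1 :: l) := by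
  intro h
  have := h ((1 :: l) ++ [0]) ⟨[0], rfl⟩ (by simp)
  simp [Hex] at this

lemma satNeg_head1 (l : List (Fin 2)) : SatNeg SatR0 (1 :: l) := by
  rintro t ⟨v, rfl⟩ h
  exact not_satR0_head1 _ h

/-- double negation elimination fails. In the example structure,
at the initial state neither `R₁(0)` nor `¬R₁(0)` holds, so
`ψ = R₁(0) ∨ ¬R₁(0)` fails at the initial state, while `¬¬ψ` holds there. -/
theorem double_negation_elimination_fails :
    ¬ SatR0 [] ∧ ¬ SatNeg SatR0 [] ∧
    SatNeg (SatNeg (fun s => SatR0 s ∨ SatNeg SatR0 s)) [] ∧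
    ¬ (SatR0 [] ∨ SatNeg SatR0 []) := by
  have hn : ¬ SatR0 [] := by
    intro h
    have := h [1, 0] ⟨[1, 0], rfl⟩ (by simp)
    simp [Hex] at this
  have hnn : ¬ SatNeg SatR0 [] := by
    intro h
    exact h [0] ⟨[0], rfl⟩ (satR0_head0 [])
  refine ⟨hn, hnn, ?_, ?_⟩
  · rintro t _ h
    match t with
    | [] => exact h [0] ⟨[0], rfl⟩ (Or.inl (satR0_head0 []))
    | x :: l =>
      fin_cases x
      · exact h (0 :: l) ⟨[], by simp⟩ (Or.inl (satR0_head0 l))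
      · exact h (1 :: l) ⟨[], by simp⟩ (Or.inr (satNeg_head1 l))
  · rintro (h | h)
    · exact hn h
    · exact hnn h
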